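/- Let g, h : ℕ → ℕ satisfy g(N)+h(N) → ∞ and (g(N)+h(N))/N → 0, and let z(N) = 2N/(g(N)+h(N)). Define R_N^{(s,o)}(x) = Σ_{k=1}^{⌊(x·z(N)+1)/2⌋} ⟨P_{2k-1}^{(s)}⟩, where ⟨P_{2k-1}^{(s)}⟩ = (gh(2k-1)/(N(N-2k+2))) · Π_{j=0}^{k-2}(1-(g-1)/(N-(2j+1)))(1-h/(N-2j)). Then for every x ≥ 0, R_N^{(s,o)}(x) ~ (2gh/(g+h)²)·(1 - e^{-x}(1+x)) as N → ∞. -/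

import Mathlib

/-!
Write `s = g + h` and `K = ⌊(x z + 1) / 2⌋`, so that `(s / N) K → x`. For `k < K` every factor
of the product in `⟨P_{2k+1}^{(s)}⟩` lies between `1 - (s - 1) / (N - 2K)` and
`exp (-(s - 1) / N)`, hence `s² R / (g h)` is squeezed between sums
`(s / N)² ∑_{k<K} (2k + 1) e^{-ck}` (the upper one times `N / (N - 2K) → 1`) with rates
`c ~ s / N`. Summing the arithmetico-geometric series in closed form,
`c² ∑_{k<K} (2k + 1) e^{-ck} → 2 (1 - e^{-x} (1 + x))` whenever `c → 0⁺` and `c K → x`.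
-/

open Filter

/-- `R_N^{(s,o)}(x) = Σ_{k=1}^{⌊(xz+1)/2⌋} ⟨P_{2k-1}^{(s)}⟩`, the expected fraction of
the space on symmetric cycles of odd period at most `x·z(N)`. -/
noncomputable def RsoN (g h : ℕ → ℕ) (x : ℝ) (N : ℕ) : ℝ :=
  ∑ k ∈ Finset.range ⌊(x * (2 * (N : ℝ) / (g N + h N : ℝ)) + 1) / 2⌋₊,
    ((g N : ℝ) * (h N : ℝ) * (2 * ((k : ℝ) + 1) - 1)) /
        ((N : ℝ) * ((N : ℝ) - 2 * ((k : ℝ) + 1) + 2)) *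
      ∏ j ∈ Finset.range k,
        (1 - ((g N : ℝ) - 1) / ((N : ℝ) - (2 * j + 1))) *
          (1 - (h N : ℝ) / ((N : ℝ) - 2 * j))

open Finset Real Topology

theorem sum_range_odd_mul_pow_mul_one_sub_sq (q : ℝ) (K : ℕ) :
    (∑ k ∈ range K, (2 * (k : ℝ) + 1) * q ^ k) * (1 - q) ^ 2 =
      (1 + q) * (1 - q ^ K) - 2 * K * q ^ K * (1 - q) := by
  induction K with
  | zero => simp
  | succ K ih =>
    rw [sum_range_succ, add_mul, ih]
    push_cast
    ring

theorem tendsto_one_sub_exp_neg_div :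
    Tendsto (fun t : ℝ => (1 - exp (-t)) / t) (𝓝[≠] 0) (𝓝 1) := by
  have hd : HasDerivAt (fun t : ℝ => 1 - exp (-t)) 1 0 := by
    simpa using ((hasDerivAt_neg (0 : ℝ)).exp).const_sub 1
  simpa [div_eq_inv_mul] using hd.tendsto_slope_zero

theorem tendsto_neg_log_one_sub_div :
    Tendsto (fun t : ℝ => -log (1 - t) / t) (𝓝[≠] 0) (𝓝 1) := by
  have hd : HasDerivAt (fun t : ℝ => -log (1 - t)) 1 0 := by
    simpa using (((hasDerivAt_id (0 : ℝ)).const_sub 1).log (by norm_num)).fun_neg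
  simpa [div_eq_inv_mul] using hd.tendsto_slope_zero

theorem tendsto_sq_mul_sum_odd_mul_exp_neg_pow {c : ℕ → ℝ} {K : ℕ → ℕ} {x : ℝ}
    (hc : Tendsto c atTop (𝓝[>] 0)) (hK : Tendsto (fun N => c N * K N) atTop (𝓝 x)) :
    Tendsto (fun N => c N ^ 2 * ∑ k ∈ range (K N), (2 * (k : ℝ) + 1) * exp (-c N) ^ k)
      atTop (𝓝 (2 * (1 - exp (-x) * (1 + x)))) := by
  have hc0 : Tendsto c atTop (𝓝 0) := tendsto_nhdsWithin_iff.mp hc |>.1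
  have hq : Tendsto (fun N => exp (-c N)) atTop (𝓝 1) := by
    simpa using hc0.neg.rexp
  have hqK : Tendsto (fun N => exp (-c N) ^ K N) atTop (𝓝 (exp (-x))) := by
    simp_rw [← exp_nat_mul, mul_neg, mul_comm (K _ : ℝ)]
    exact (continuous_exp.tendsto _).comp hK.neg
  have hslope : Tendsto (fun N => (1 - exp (-c N)) / c N) atTop (𝓝 1) :=
    tendsto_one_sub_exp_neg_div.comp (hc.mono_right (nhdsGT_le_nhdsNE 0))
  -- with `q = e^{-c}`: `c² ∑ = ((1 + q)(1 - q^K) - 2 (cK) q^K (1 - q)/c) / ((1 - q)/c)²`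
  have hlim := (((hq.const_add 1).mul (hqK.const_sub 1)).sub
    ((hK.const_mul 2).mul hqK |>.mul hslope)).div (hslope.pow 2) (by norm_num)
  rw [show 2 * (1 - exp (-x) * (1 + x)) =
    ((1 + 1) * (1 - exp (-x)) - 2 * x * exp (-x) * 1) / 1 ^ 2 by ring]
  refine hlim.congr' ?_
  filter_upwards [tendsto_nhdsWithin_iff.mp hc |>.2] with N (hcN : 0 < c N)
  have hq1 : 1 - exp (-c N) ≠ 0 := (sub_pos.mpr (exp_lt_one_iff.mpr (by linarith))).ne'
  have hS := sum_range_odd_mul_pow_mul_one_sub_sq (exp (-c N)) (K N)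
  rw [← eq_div_iff (pow_ne_zero 2 hq1)] at hS
  simp only [Pi.div_apply, hS]
  field_simp

theorem tendsto_sq_mul_sum_odd_mul_exp_neg_pow_of_div {w c : ℕ → ℝ} {K : ℕ → ℕ} {x : ℝ}
    (hw : Tendsto w atTop (𝓝 0)) (hwK : Tendsto (fun N => w N * K N) atTop (𝓝 x))
    (hcw : Tendsto (fun N => c N / w N) atTop (𝓝 1)) (hc : ∀ᶠ N in atTop, 0 < c N) :
    Tendsto (fun N => w N ^ 2 * ∑ k ∈ range (K N), (2 * (k : ℝ) + 1) * exp (-c N) ^ k)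
      atTop (𝓝 (2 * (1 - exp (-x) * (1 + x)))) := by
  have hw0 : ∀ᶠ N in atTop, w N ≠ 0 := by
    filter_upwards [hcw.eventually_ne one_ne_zero] with N hN
    exact (div_ne_zero_iff.mp hN).2
  have hc0 : Tendsto c atTop (𝓝[>] 0) := by
    refine tendsto_nhdsWithin_iff.mpr ⟨?_, hc⟩
    simpa using (hcw.mul hw).congr' (hw0.mono fun N hN => div_mul_cancel₀ _ hN)
  have hcK : Tendsto (fun N => c N * K N) atTop (𝓝 x) := by
    refine (by simpa using hcw.mul hwK : Tendsto _ _ (𝓝 x)).congr' ?_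
    filter_upwards [hw0] with N hN
    field_simp
  have hlim := ((hcw.inv₀ one_ne_zero).pow 2).mul (tendsto_sq_mul_sum_odd_mul_exp_neg_pow hc0 hcK)
  rw [inv_one, one_pow, one_mul] at hlim
  refine hlim.congr' ?_
  filter_upwards [hw0, hc] with N hwN hcN
  field_simp

theorem one_sub_exp_neg_mul_one_add_pos {x : ℝ} (hx : 0 < x) : 0 < 1 - exp (-x) * (1 + x) := by
  have h := mul_lt_mul_of_pos_left (add_one_lt_exp hx.ne') (exp_pos (-x))
  rw [← exp_add, neg_add_cancel, exp_zero, add_comm] at h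
  linarith

noncomputable def symmFactor (n G H : ℝ) (j : ℕ) : ℝ :=
  (1 - (G - 1) / (n - (2 * j + 1))) * (1 - H / (n - 2 * j))

/-- The product in `⟨P_{2k+1}^{(s)}⟩`: the paper's index `k` is shifted down by one. -/
noncomputable def symmProd (n G H : ℝ) (k : ℕ) : ℝ :=
  ∏ j ∈ range k, symmFactor n G H j

noncomputable def symmOddSum (n G H : ℝ) (K : ℕ) : ℝ :=
  ∑ k ∈ range K, (2 * k + 1) / (n * (n - 2 * k)) * symmProd n G H k

section Bounds

variable {n G H : ℝ} {j k m K : ℕ}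

theorem one_sub_div_le_symmFactor (hG : 1 ≤ G) (hH : 0 ≤ H) (hm : 0 < n - 2 * m) (hj : j < m) :
    1 - (G + H - 1) / (n - 2 * m) ≤ symmFactor n G H j := by
  have hjm : (2 * j + 1 : ℝ) ≤ 2 * m := by exact_mod_cast (by omega : 2 * j + 1 ≤ 2 * m)
  have ha : (G - 1) / (n - (2 * j + 1)) ≤ (G - 1) / (n - 2 * m) :=
    div_le_div_of_nonneg_left (by linarith) hm (by linarith)
  have hb : H / (n - 2 * j) ≤ H / (n - 2 * m) :=
    div_le_div_of_nonneg_left hH hm (by linarith)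
  have hab : 0 ≤ (G - 1) / (n - (2 * j + 1)) * (H / (n - 2 * j)) := by
    apply mul_nonneg <;> apply div_nonneg <;> linarith
  rw [symmFactor, add_sub_right_comm, add_div]
  nlinarith

theorem symmFactor_le_exp (hG : 1 ≤ G) (hH : 0 ≤ H) (hm : G + H - 1 < n - 2 * m)
    (hj : j < m) : symmFactor n G H j ≤ exp (-((G + H - 1) / n)) := by
  have hjm : (2 * j + 1 : ℝ) ≤ 2 * m := by exact_mod_cast (by omega : 2 * j + 1 ≤ 2 * m)
  have hm0 : (0 : ℝ) ≤ 2 * m := by positivity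
  have ha : (G - 1) / n ≤ (G - 1) / (n - (2 * j + 1)) :=
    div_le_div_of_nonneg_left (by linarith) (by linarith) (by linarith)
  have hb : H / n ≤ H / (n - 2 * j) :=
    div_le_div_of_nonneg_left hH (by linarith) (by linarith)
  have ha1 : (G - 1) / (n - (2 * j + 1)) ≤ 1 := (div_le_one (by linarith)).mpr (by linarith)
  have hb1 : H / (n - 2 * j) ≤ 1 := (div_le_one (by linarith)).mpr (by linarith)
  have hb0 : 0 ≤ H / (n - 2 * j) := div_nonneg hH (by linarith)
  calc symmFactor n G H j ≤ (1 - (G - 1) / n) * (1 - H / n) :=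
        mul_le_mul (by linarith) (by linarith) (by linarith) (by linarith)
    _ ≤ exp (-((G - 1) / n)) * exp (-(H / n)) :=
        mul_le_mul (one_sub_le_exp_neg _) (one_sub_le_exp_neg _) (by linarith) (exp_pos _).le
    _ = exp (-((G + H - 1) / n)) := by rw [← exp_add]; ring_nf

theorem one_sub_div_pow_le_symmProd (hG : 1 ≤ G) (hH : 0 ≤ H) (hm : G + H - 1 < n - 2 * m)
    (hk : k ≤ m) : (1 - (G + H - 1) / (n - 2 * m)) ^ k ≤ symmProd n G H k := by
  have hm0 : 0 < n - 2 * m := by linarith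
  have hu : 0 ≤ 1 - (G + H - 1) / (n - 2 * m) := sub_nonneg.mpr ((div_le_one hm0).mpr hm.le)
  simpa [symmProd] using prod_le_prod (s := range k) (fun _ _ => hu) fun j hj =>
    one_sub_div_le_symmFactor hG hH hm0 ((mem_range.mp hj).trans_le hk)

theorem symmProd_le_exp_pow (hG : 1 ≤ G) (hH : 0 ≤ H) (hm : G + H - 1 < n - 2 * m)
    (hk : k ≤ m) : symmProd n G H k ≤ exp (-((G + H - 1) / n)) ^ k := by
  have hm0 : 0 < n - 2 * m := by linarith
  have hu : 0 ≤ 1 - (G + H - 1) / (n - 2 * m) := sub_nonneg.mpr ((div_le_one hm0).mpr hm.le)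
  simpa [symmProd] using prod_le_prod (s := range k)
    (fun j hj => hu.trans (one_sub_div_le_symmFactor hG hH hm0 ((mem_range.mp hj).trans_le hk)))
    fun j hj => symmFactor_le_exp hG hH hm ((mem_range.mp hj).trans_le hk)

theorem sum_odd_mul_one_sub_div_pow_div_le_symmOddSum (hG : 1 ≤ G) (hH : 0 ≤ H)
    (hK : G + H - 1 < n - 2 * K) :
    (∑ k ∈ range K, (2 * (k : ℝ) + 1) * (1 - (G + H - 1) / (n - 2 * K)) ^ k) / n ^ 2 ≤
      symmOddSum n G H K := by
  have hu : 0 ≤ 1 - (G + H - 1) / (n - 2 * K) :=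
    sub_nonneg.mpr ((div_le_one (by linarith)).mpr hK.le)
  rw [symmOddSum, sum_div]
  refine sum_le_sum fun k hk => ?_
  have hkK : (k : ℝ) + 1 ≤ K := by exact_mod_cast mem_range.mp hk
  have hnk : 0 < n - 2 * k := by linarith
  rw [mul_div_right_comm]
  refine mul_le_mul ?_ (one_sub_div_pow_le_symmProd hG hH hK (mem_range.mp hk).le)
    (pow_nonneg hu _) (div_nonneg (by positivity) (mul_pos (by linarith) hnk).le)
  rw [sq]
  exact div_le_div_of_nonneg_left (by positivity) (by nlinarith) (by nlinarith)

theorem symmOddSum_le_sum_odd_mul_exp_neg_pow_div (hG : 1 ≤ G) (hH : 0 ≤ H)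
    (hK : G + H - 1 < n - 2 * K) :
    symmOddSum n G H K ≤
      (∑ k ∈ range K, (2 * (k : ℝ) + 1) * exp (-((G + H - 1) / n)) ^ k) / (n * (n - 2 * K)) := by
  have hu : 0 ≤ 1 - (G + H - 1) / (n - 2 * K) :=
    sub_nonneg.mpr ((div_le_one (by linarith)).mpr hK.le)
  rw [symmOddSum, sum_div]
  refine sum_le_sum fun k hk => ?_
  have hkK : (k : ℝ) + 1 ≤ K := by exact_mod_cast mem_range.mp hk
  have hnK : 0 < n - 2 * K := by linarith
  rw [mul_div_right_comm]
  refine mul_le_mul ?_ (symmProd_le_exp_pow hG hH hK (mem_range.mp hk).le)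
    ((pow_nonneg hu k).trans (one_sub_div_pow_le_symmProd hG hH hK (mem_range.mp hk).le))
    (div_nonneg (by positivity) (mul_pos (by linarith) hnK).le)
  exact div_le_div_of_nonneg_left (by positivity) (by nlinarith) (by nlinarith)

end Bounds

section Asymptotics

variable {s : ℕ → ℝ} {K : ℕ → ℕ} {x : ℝ}

theorem tendsto_div_natCast_of_tendsto_mul (hs : Tendsto s atTop atTop)
    (hK : Tendsto (fun N => s N / N * K N) atTop (𝓝 x)) :
    Tendsto (fun N => (K N : ℝ) / N) atTop (𝓝 0) := by
  refine (hK.div_atTop hs).congr' ?_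
  filter_upwards [hs.eventually_gt_atTop 0] with N hN
  field_simp

theorem tendsto_natCast_div_natCast_sub_two_mul (hs : Tendsto s atTop atTop)
    (hK : Tendsto (fun N => s N / N * K N) atTop (𝓝 x)) :
    Tendsto (fun N : ℕ => (N : ℝ) / (N - 2 * K N)) atTop (𝓝 1) := by
  have h := (((tendsto_div_natCast_of_tendsto_mul hs hK).const_mul 2).const_sub 1).inv₀
    (by norm_num)
  simp only [mul_zero, sub_zero, inv_one] at h
  refine h.congr' ?_
  filter_upwards [eventually_gt_atTop 0] with N hN
  rw [mul_div_assoc', one_sub_div (by positivity), inv_div]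

theorem eventually_sub_one_lt_sub_two_mul (hs : Tendsto s atTop atTop)
    (hw : Tendsto (fun N => s N / N) atTop (𝓝 0))
    (hK : Tendsto (fun N => s N / N * K N) atTop (𝓝 x)) :
    ∀ᶠ N in atTop, s N - 1 < N - 2 * K N := by
  have h := hw.add ((tendsto_div_natCast_of_tendsto_mul hs hK).const_mul 2)
  rw [mul_zero, add_zero] at h
  filter_upwards [h.eventually_lt_const one_pos, eventually_gt_atTop 0] with N hN hN0
  rw [mul_div_assoc', ← add_div, div_lt_one (by positivity)] at hN
  linarith

theorem tendsto_sub_one_div_natCast_div (hs : Tendsto s atTop atTop) :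
    Tendsto (fun N => (s N - 1) / N / (s N / N)) atTop (𝓝 1) := by
  have h := hs.inv_tendsto_atTop.const_sub 1
  rw [sub_zero] at h
  refine h.congr' ?_
  filter_upwards [hs.eventually_gt_atTop 0, eventually_gt_atTop 0] with N hN hN0
  simp only [Pi.inv_apply]
  field_simp

theorem tendsto_neg_log_one_sub_div_div (hs : Tendsto s atTop atTop)
    (hw : Tendsto (fun N => s N / N) atTop (𝓝 0))
    (hK : Tendsto (fun N => s N / N * K N) atTop (𝓝 x)) :
    Tendsto (fun N => -log (1 - (s N - 1) / (N - 2 * K N)) / (s N / N)) atTop (𝓝 1) := by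
  set u := fun N => (s N - 1) / (N - 2 * K N) with hu_def
  have hu : Tendsto (fun N => u N / (s N / N)) atTop (𝓝 1) := by
    have h := (tendsto_sub_one_div_natCast_div hs).mul
      (tendsto_natCast_div_natCast_sub_two_mul hs hK)
    rw [one_mul] at h
    refine h.congr' ?_
    filter_upwards [eventually_sub_one_lt_sub_two_mul hs hw hK, hs.eventually_gt_atTop 1,
      eventually_gt_atTop 0] with N hN hs1 hN0
    have : (N : ℝ) - 2 * K N ≠ 0 := by linarith
    simp only [hu_def]
    field_simp
  have hu_ne : ∀ᶠ N in atTop, u N ≠ 0 :=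
    (hu.eventually_ne one_ne_zero).mono fun N hN => (div_ne_zero_iff.mp hN).1
  have hu0 : Tendsto u atTop (𝓝[≠] 0) := by
    refine tendsto_nhdsWithin_iff.mpr ⟨?_, hu_ne⟩
    have h := hu.mul hw
    rw [one_mul] at h
    refine h.congr' ?_
    filter_upwards [hs.eventually_gt_atTop 0, eventually_gt_atTop 0] with N hN hN0
    field_simp
  have h := (tendsto_neg_log_one_sub_div.comp hu0).mul hu
  rw [one_mul] at h
  refine h.congr' ?_
  filter_upwards [hu_ne] with N hN
  exact div_mul_div_cancel₀ hN

end Asymptotics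

theorem tendsto_sq_mul_symmOddSum {G H : ℕ → ℝ} {K : ℕ → ℕ} {x : ℝ}
    (hG : ∀ N, 1 ≤ G N) (hH : ∀ N, 0 ≤ H N)
    (hs : Tendsto (fun N => G N + H N) atTop atTop)
    (hw : Tendsto (fun N => (G N + H N) / N) atTop (𝓝 0))
    (hK : Tendsto (fun N => (G N + H N) / N * K N) atTop (𝓝 x)) :
    Tendsto (fun N => (G N + H N) ^ 2 * symmOddSum N (G N) (H N) (K N)) atTop
      (𝓝 (2 * (1 - exp (-x) * (1 + x)))) := by
  have hgap := eventually_sub_one_lt_sub_two_mul hs hw hK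
  -- with `u = (G + H - 1) / (N - 2K)`, the lower rate `c = -log (1 - u)` makes `exp (-c) ^ k`
  -- exactly the lower bound `(1 - u) ^ k`
  have hlower := tendsto_sq_mul_sum_odd_mul_exp_neg_pow_of_div hw hK
    (tendsto_neg_log_one_sub_div_div hs hw hK) (by
      filter_upwards [hgap, hs.eventually_gt_atTop 1] with N hN hs1
      have hN2K : 0 < (N : ℝ) - 2 * K N := by linarith
      exact neg_pos.mpr (log_neg (sub_pos.mpr ((div_lt_one hN2K).mpr hN))
        (sub_lt_self _ (div_pos (by linarith) hN2K))))
  have hupper := (tendsto_natCast_div_natCast_sub_two_mul hs hK).mul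
    (tendsto_sq_mul_sum_odd_mul_exp_neg_pow_of_div hw hK (tendsto_sub_one_div_natCast_div hs) (by
      filter_upwards [hs.eventually_gt_atTop 1, eventually_gt_atTop 0] with N hs1 hN0
      exact div_pos (by linarith) (by positivity)))
  rw [one_mul] at hupper
  refine tendsto_of_tendsto_of_tendsto_of_le_of_le' hlower hupper ?_ ?_
  · filter_upwards [hgap, eventually_gt_atTop 0] with N hN hN0
    have hu : 0 < 1 - (G N + H N - 1) / (N - 2 * K N) :=
      sub_pos.mpr ((div_lt_one (by linarith [hG N, hH N])).mpr hN)
    calc _ = (G N + H N) ^ 2 * ((∑ k ∈ range (K N), (2 * (k : ℝ) + 1) *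
          (1 - (G N + H N - 1) / (N - 2 * K N)) ^ k) / (N : ℝ) ^ 2) := by
          rw [neg_neg, exp_log hu]
          ring
      _ ≤ _ := mul_le_mul_of_nonneg_left
          (sum_odd_mul_one_sub_div_pow_div_le_symmOddSum (hG N) (hH N) hN) (sq_nonneg _)
  · filter_upwards [hgap, eventually_gt_atTop 0] with N hN hN0
    have hN2K : (N : ℝ) - 2 * K N ≠ 0 := by linarith [hG N, hH N]
    calc _ ≤ (G N + H N) ^ 2 * ((∑ k ∈ range (K N), (2 * (k : ℝ) + 1) *
          exp (-((G N + H N - 1) / N)) ^ k) / (N * (N - 2 * K N))) :=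
          mul_le_mul_of_nonneg_left
            (symmOddSum_le_sum_odd_mul_exp_neg_pow_div (hG N) (hH N) hN) (sq_nonneg _)
      _ = _ := by field_simp

theorem tendsto_mul_floor_div {w : ℕ → ℝ} {x : ℝ} (hw : Tendsto w atTop (𝓝[>] 0))
    (hx : 0 ≤ x) :
    Tendsto (fun N => w N * ⌊(x * (2 / w N) + 1) / 2⌋₊) atTop (𝓝 x) := by
  obtain ⟨hw0, hpos⟩ := tendsto_nhdsWithin_iff.mp hw
  have hlow : Tendsto (fun N => x - w N / 2) atTop (𝓝 x) := by
    simpa using (hw0.div_const 2).const_sub x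
  have hup : Tendsto (fun N => x + w N / 2) atTop (𝓝 x) := by
    simpa using (hw0.div_const 2).const_add x
  refine tendsto_of_tendsto_of_tendsto_of_le_of_le' hlow hup ?_ ?_ <;>
    filter_upwards [hpos] with N (hN : 0 < w N)
  · have := Nat.lt_floor_add_one ((x * (2 / w N) + 1) / 2)
    have hlow_eq : x - w N / 2 = w N * ((x * (2 / w N) + 1) / 2 - 1) := by field_simp; ring
    rw [hlow_eq]
    exact mul_le_mul_of_nonneg_left (by linarith) hN.le
  · have := Nat.floor_le (by positivity : 0 ≤ (x * (2 / w N) + 1) / 2)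
    have hup_eq : x + w N / 2 = w N * ((x * (2 / w N) + 1) / 2) := by field_simp
    rw [hup_eq]
    exact mul_le_mul_of_nonneg_left this hN.le

theorem RsoN_eq_mul_symmOddSum (g h : ℕ → ℕ) (x : ℝ) (N : ℕ) :
    RsoN g h x N = g N * h N *
      symmOddSum N (g N) (h N) ⌊(x * (2 * (N : ℝ) / (g N + h N : ℝ)) + 1) / 2⌋₊ := by
  rw [RsoN, symmOddSum, mul_sum]
  refine sum_congr rfl fun k _ => ?_
  rw [symmProd]
  unfold symmFactor
  ring

theorem symmetric_odd_distribution_asymptotics_general (g h : ℕ → ℕ)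
    (hg : ∀ N, 1 ≤ g N) (hh : ∀ N, 1 ≤ h N)
    (h1 : Tendsto (fun N : ℕ => (g N + h N : ℝ)) atTop atTop)
    (h2 : Tendsto (fun N : ℕ => (g N + h N : ℝ) / N) atTop (nhds 0))
    (x : ℝ) :
    (x = 0 → ∀ N, RsoN g h x N = 0) ∧
    (0 < x →
      Tendsto
        (fun N : ℕ =>
          RsoN g h x N /
            ((2 * (g N : ℝ) * (h N : ℝ) / ((g N : ℝ) + (h N : ℝ)) ^ 2) *
              (1 - Real.exp (-x) * (1 + x))))
        atTop (nhds 1)) := by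
  refine ⟨fun hx0 N => by simp [RsoN, hx0, Nat.floor_eq_zero.mpr (by norm_num : (2 : ℝ)⁻¹ < 1)],
    fun hx0 => ?_⟩
  have hG (N : ℕ) : (1 : ℝ) ≤ g N := Nat.one_le_cast.mpr (hg N)
  have hH (N : ℕ) : (1 : ℝ) ≤ h N := Nat.one_le_cast.mpr (hh N)
  have hw : Tendsto (fun N : ℕ => (g N + h N : ℝ) / N) atTop (𝓝[>] 0) :=
    tendsto_nhdsWithin_iff.mpr ⟨h2, (eventually_gt_atTop 0).mono fun N (hN : 0 < N) =>
      show (0 : ℝ) < _ from div_pos (by linarith [hG N, hH N]) (Nat.cast_pos.mpr hN)⟩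
  have hK := tendsto_mul_floor_div hw hx0.le
  simp only [div_div_eq_mul_div] at hK
  have hlim := tendsto_sq_mul_symmOddSum hG (fun N => (hH N).trans' zero_le_one) h1 h2 hK
  have hL := one_sub_exp_neg_mul_one_add_pos hx0
  rw [← div_self (by positivity : 2 * (1 - exp (-x) * (1 + x)) ≠ 0)]
  refine (hlim.div_const _).congr fun N => ?_
  have := hG N
  have := hH N
  rw [RsoN_eq_mul_symmOddSum]
  field_simp

/-- For every `x ≥ 0`, `R_N^{(s,o)}(x) ~ (2gh/(g+h)²)·(1 - e^{-x}(1+x))` as `N → ∞`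
(at `x = 0` both sides are `0`). -/
theorem symmetric_odd_distribution_asymptotics (g h : ℕ → ℕ)
    (hg : ∀ N, 1 ≤ g N) (hh : ∀ N, 1 ≤ h N)
    (h1 : Tendsto (fun N : ℕ => (g N + h N : ℝ)) atTop atTop)
    (h2 : Tendsto (fun N : ℕ => (g N + h N : ℝ) / N) atTop (nhds 0))
    (x : ℝ) (hx : 0 ≤ x) :
    (x = 0 → ∀ N, RsoN g h x N = 0) ∧
    (0 < x →
      Tendsto
        (fun N : ℕ =>
          RsoN g h x N /
            ((2 * (g N : ℝ) * (h N : ℝ) / ((g N : ℝ) + (h N : ℝ)) ^ 2) *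
              (1 - Real.exp (-x) * (1 + x))))
        atTop (nhds 1)) :=
  symmetric_odd_distribution_asymptotics_general g h hg hh h1 h2 x
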